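/- Let λ₂ ≤ ... ≤ λ_N be the nonzero Laplacian eigenvalues of a connected undirected graph and suppose the stability region of the master stability function is the interval (α_c¹, α_c²). There exists a coupling strength α > 0 with α_c¹ < αλᵢ < α_c² for all i = 2,...,N if and only if λ_N/λ₂ < α_c²/α_c¹. -/
import Mathlib


/-- Let λ₂ ≤ ... ≤ λ_N be the nonzero Laplacian eigenvalues of a connected
undirected graph and (α_c¹, α_c²) the stability interval of the master
stability function. There exists a coupling α > 0 with α_c¹ < αλᵢ < α_c² for
all i = 2,...,N iff λ_N/λ₂ < α_c²/α_c¹. -/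
theorem msf_synchronizability (N : ℕ) (hN : 2 ≤ N)
    (αc₁ αc₂ : ℝ) (h₁ : 0 < αc₁) (h₁₂ : αc₁ < αc₂)
    (lam : ℕ → ℝ) (hpos : 0 < lam 2)
    (hmono : ∀ i j, 2 ≤ i → i ≤ j → j ≤ N → lam i ≤ lam j) :
    (∃ α : ℝ, 0 < α ∧ ∀ i, 2 ≤ i → i ≤ N →
      αc₁ < α * lam i ∧ α * lam i < αc₂) ↔
    lam N / lam 2 < αc₂ / αc₁ := by
  have h2N : lam 2 ≤ lam N := hmono 2 N le_rfl hN le_rfl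
  have hNpos : 0 < lam N := lt_of_lt_of_le hpos h2N
  constructor
  · rintro ⟨α, hα, hspec⟩
    obtain ⟨h2, -⟩ := hspec 2 le_rfl hN
    obtain ⟨-, hNlt⟩ := hspec N hN le_rfl
    rw [div_lt_div_iff₀ hpos h₁]
    nlinarith
  · intro h
    rw [div_lt_div_iff₀ hpos h₁] at h
    have hlt : αc₁ / lam 2 < αc₂ / lam N := by
      rw [div_lt_div_iff₀ hpos hNpos]; nlinarith
    obtain ⟨α, hα1, hα2⟩ := exists_between hlt
    refine ⟨α, lt_trans (div_pos h₁ hpos) hα1, fun i h2i hiN => ?_⟩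
    have hαpos : 0 < α := lt_trans (div_pos h₁ hpos) hα1
    have hle1 : lam 2 ≤ lam i := hmono 2 i le_rfl h2i hiN
    have hle2 : lam i ≤ lam N := hmono i N h2i hiN le_rfl
    have ha : αc₁ < α * lam 2 := (div_lt_iff₀ hpos).mp hα1
    have hb : α * lam N < αc₂ := (lt_div_iff₀ hNpos).mp hα2
    constructor
    · calc αc₁ < α * lam 2 := ha
        _ ≤ α * lam i := by nlinarith
    · calc α * lam i ≤ α * lam N := by nlinarith
        _ < αc₂ := hb
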